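/- Let (Ω, F, P) be a probability space, let W : Ω → ℝ be an integrable random variable, and let τ > 0. Then f_τ ∘ W is integrable and |E[f_τ(W)] − E[|W|]| ≤ τ·log 2. In particular, for any sequence τ_n → 0⁺, E[f_{τ_n}(W)] → E[|W|]. -/

import Mathlib

/-! With `x = u / τ`, one has `g_τ(u) = u + 2τ log(1 + e^{-x})` and
`h_τ(u) = u - 2u / (e^{2x} + 1)`, so `f_τ(u) = u + τ γ(x)` for the gap function
`γ(x) = log(1 + e^{-x}) - x / (e^{2x} + 1)`. Since `f_τ` is even, it suffices to know
`0 ≤ γ ≤ log 2` on `[0, ∞)`; the lower bound is `log(1 + e^{-x}) ≥ 1 / (e^x + 1)`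
combined with `x (e^x + 1) ≤ e^{2x} + 1`. Hence `|u| ≤ f_τ(u) ≤ |u| + τ log 2`, which
integrates to the claim. -/

open MeasureTheory

/-- Hutson's smooth approximation of the absolute value. -/
noncomputable def gSmooth (τ u : ℝ) : ℝ :=
  τ * (Real.log (Real.exp (-u / τ) + 1) + Real.log (Real.exp (u / τ) + 1))

/-- The hyperbolic-tangent smooth approximation of the absolute value. -/
noncomputable def hSmooth (τ u : ℝ) : ℝ := u * Real.tanh (u / τ)

/-- The mixed smooth approximation `f_τ = (g_τ + h_τ)/2` of the absolute value. -/
noncomputable def fSmooth (τ u : ℝ) : ℝ := (gSmooth τ u + hSmooth τ u) / 2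

open Real

namespace SmoothAbs

noncomputable def gap (x : ℝ) : ℝ := log (exp (-x) + 1) - x / (exp (2 * x) + 1)

lemma log_exp_add_one (x : ℝ) : log (exp x + 1) = x + log (exp (-x) + 1) := by
  have : exp x + 1 = exp x * (exp (-x) + 1) := by
    rw [mul_add, ← exp_add, add_neg_cancel, exp_zero, mul_one, add_comm 1]
  rw [this, log_mul (exp_pos x).ne' (by positivity), log_exp]

lemma tanh_eq_one_sub (x : ℝ) : tanh x = 1 - 2 / (exp (2 * x) + 1) := by
  have h2x : exp (2 * x) = exp x * exp x := by rw [two_mul, exp_add]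
  rw [tanh_eq, exp_neg, h2x]
  field_simp
  ring

lemma fSmooth_eq {τ : ℝ} (hτ : τ ≠ 0) (u : ℝ) : fSmooth τ u = u + τ * gap (u / τ) := by
  obtain ⟨x, rfl⟩ : ∃ x, u = τ * x := ⟨u / τ, by field_simp⟩
  unfold fSmooth gSmooth hSmooth gap
  rw [neg_div, mul_div_cancel_left₀ x hτ, log_exp_add_one x, tanh_eq_one_sub]
  ring

lemma continuous_gap : Continuous gap := by
  unfold gap
  exact .sub (.log (by fun_prop) fun x => by positivity)
    (.div (by fun_prop) (by fun_prop) fun x => by positivity)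

lemma continuous_fSmooth {τ : ℝ} (hτ : τ ≠ 0) : Continuous (fSmooth τ) := by
  rw [funext (fSmooth_eq hτ)]
  exact continuous_id.add
    (continuous_const.mul (continuous_gap.comp (continuous_id.div_const τ)))

lemma gap_nonneg {x : ℝ} (hx : 0 ≤ x) : 0 ≤ gap x := by
  have hE := add_one_le_exp x
  have hpos : 0 < exp x := exp_pos x
  have h2x : exp (2 * x) = exp x * exp x := by rw [two_mul, exp_add]
  have hlog : 1 / (exp x + 1) ≤ log (exp (-x) + 1) := by
    have := one_sub_inv_le_log_of_pos (x := exp (-x) + 1) (by positivity)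
    convert this using 1
    rw [exp_neg]
    field_simp
    ring
  have hfrac : x / (exp (2 * x) + 1) ≤ 1 / (exp x + 1) := by
    rw [div_le_div_iff₀ (by positivity) (by positivity), h2x]
    nlinarith
  unfold gap
  linarith

lemma gap_le_log_two {x : ℝ} (hx : 0 ≤ x) : gap x ≤ log 2 := by
  have hlog : log (exp (-x) + 1) ≤ log 2 :=
    log_le_log (by positivity) (by linarith [exp_le_one_iff.mpr (neg_nonpos.mpr hx)])
  have hfrac : 0 ≤ x / (exp (2 * x) + 1) := by positivity
  unfold gap
  linarith

lemma fSmooth_neg (τ u : ℝ) : fSmooth τ (-u) = fSmooth τ u := by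
  unfold fSmooth gSmooth hSmooth
  rw [neg_neg, neg_div, tanh_neg]
  ring

lemma fSmooth_abs (τ u : ℝ) : fSmooth τ |u| = fSmooth τ u := by
  rcases abs_choice u with h | h <;> rw [h]
  exact fSmooth_neg τ u

lemma abs_le_fSmooth {τ : ℝ} (hτ : 0 < τ) (u : ℝ) : |u| ≤ fSmooth τ u := by
  rw [← fSmooth_abs, fSmooth_eq hτ.ne']
  have := gap_nonneg (div_nonneg (abs_nonneg u) hτ.le)
  nlinarith

lemma fSmooth_le_abs_add {τ : ℝ} (hτ : 0 < τ) (u : ℝ) : fSmooth τ u ≤ |u| + τ * log 2 := by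
  rw [← fSmooth_abs, fSmooth_eq hτ.ne']
  have := gap_le_log_two (div_nonneg (abs_nonneg u) hτ.le)
  nlinarith

lemma abs_fSmooth_sub_abs_le {τ : ℝ} (hτ : 0 < τ) (u : ℝ) :
    |(fSmooth τ u - |u|)| ≤ τ * log 2 :=
  abs_le.mpr ⟨by linarith [abs_le_fSmooth hτ u, mul_pos hτ (log_pos one_lt_two)],
    by linarith [fSmooth_le_abs_add hτ u]⟩

end SmoothAbs

section IntegralComparison

variable {Ω : Type*} [MeasurableSpace Ω] {μ : Measure Ω} [IsFiniteMeasure μ]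
  {F G : Ω → ℝ} {c : ℝ}

lemma integrable_of_abs_sub_le (hF : AEStronglyMeasurable F μ) (hG : Integrable G μ)
    (h : ∀ ω, |F ω - G ω| ≤ c) : Integrable F μ := by
  have hdiff : Integrable (F - G) μ :=
    .of_bound (hF.sub hG.aestronglyMeasurable) c
      (.of_forall fun ω => (norm_eq_abs _).trans_le (h ω))
  simpa using hdiff.add hG

lemma abs_integral_sub_integral_le [IsProbabilityMeasure μ] (hF : Integrable F μ)
    (hG : Integrable G μ) (h : ∀ ω, |F ω - G ω| ≤ c) : |∫ ω, F ω ∂μ - ∫ ω, G ω ∂μ| ≤ c := by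
  rw [← integral_sub hF hG]
  simpa using norm_integral_le_of_norm_le_const (μ := μ)
    (.of_forall fun ω => (norm_eq_abs _).trans_le (h ω))

end IntegralComparison

open SmoothAbs

/-- For an integrable random variable `W`, `f_τ ∘ W` is integrable with
`|E[f_τ(W)] − E[|W|]| ≤ τ·log 2`; in particular `E[f_{τ_n}(W)] → E[|W|]`
whenever `τ_n → 0⁺`. (Uniform convergence of the smoothed population objective,
from the proof of Theorem 3.4(i).) -/
theorem fSmooth_expectation_approx
    {Ω : Type*} [MeasurableSpace Ω] (P : Measure Ω) [IsProbabilityMeasure P]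
    (W : Ω → ℝ) (hW : Integrable W P) :
    (∀ τ : ℝ, 0 < τ →
      Integrable (fun ω => fSmooth τ (W ω)) P ∧
      |(∫ ω, fSmooth τ (W ω) ∂P) - ∫ ω, |W ω| ∂P| ≤ τ * Real.log 2) ∧
    (∀ τ : ℕ → ℝ, (∀ n, 0 < τ n) → Filter.Tendsto τ Filter.atTop (nhds 0) →
      Filter.Tendsto (fun n => ∫ ω, fSmooth (τ n) (W ω) ∂P) Filter.atTop
        (nhds (∫ ω, |W ω| ∂P))) := by
  have approx : ∀ τ : ℝ, 0 < τ →
      Integrable (fun ω => fSmooth τ (W ω)) P ∧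
      |(∫ ω, fSmooth τ (W ω) ∂P) - ∫ ω, |W ω| ∂P| ≤ τ * Real.log 2 := by
    intro τ hτ
    have hclose := fun ω => abs_fSmooth_sub_abs_le hτ (W ω)
    have hmeas := (continuous_fSmooth hτ.ne').comp_aestronglyMeasurable hW.aestronglyMeasurable
    have hint := integrable_of_abs_sub_le hmeas hW.abs hclose
    exact ⟨hint, abs_integral_sub_integral_le hint hW.abs hclose⟩
  refine ⟨approx, fun τ hpos hlim => ?_⟩
  have hgap : Filter.Tendsto (fun n => τ n * Real.log 2) Filter.atTop (nhds 0) := by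
    simpa using hlim.mul_const (Real.log 2)
  have hdiff := squeeze_zero_norm
    (fun n => (Real.norm_eq_abs _).trans_le (approx (τ n) (hpos n)).2) hgap
  simpa using hdiff.add_const (∫ ω, |W ω| ∂P)
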